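/- arXiv:1410.1242 — 2 statements merged into one kernel-verified Lean document; each statement's English description precedes it below -/
import Mathlib

section
/- For a rectangular configuration y defined by parameters (n, m, d_1, d_2, s) in the 2-dimensional Ising model, the sufficient statistics are T_1(y) = n·m + d_1 + d_2 + s and T_2(y) = 2(n + m + δ_{d_1} + d_2 + 2s), where δ_{d_1} = 0 if d_1 = 0 and δ_{d_1} = 1 otherwise. -/
open Finset

def nbrs (v : ℤ × ℤ) : Finset (ℤ × ℤ) :=
  {(v.1 + 1, v.2), (v.1 - 1, v.2), (v.1, v.2 + 1), (v.1, v.2 - 1)}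

/-- `T2` of a finite configuration in the grid `ℤ²` (configurations are placed far
from the boundary of the lattice): the number of grid edges with exactly one
endpoint in `A`, each counted once from its endpoint in `A`. -/
def T2 (A : Finset (ℤ × ℤ)) : ℕ :=
  ∑ v ∈ A, ((nbrs v).filter (fun w => w ∉ A)).card

/-- The rectangular configuration with parameters `(n, m, d₁, d₂, s)`: an `n × m`
solid rectangle of ones (`m ≤ n`), a `d₁ × 1` block attached along a shorter side
(of length `m`), `d₂ ∈ {0,1}` extra ones attached on a longer side, and `s`
singletons placed far away (pairwise non-adjacent and non-adjacent to the rest). -/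
noncomputable def rectConfig (n m d1 d2 s : ℕ) : Finset (ℤ × ℤ) :=
  (Finset.Icc 1 (n : ℤ) ×ˢ Finset.Icc 1 (m : ℤ)) ∪
  ({((n : ℤ) + 1)} ×ˢ Finset.Icc 1 (d1 : ℤ)) ∪
  (if d2 = 1 then {((1 : ℤ), (m : ℤ) + 1)} else ∅) ∪
  (Finset.range s).image (fun k : ℕ => ((2 * (k : ℤ)), (-3 : ℤ)))

-- disjointness of the four pieces
lemma disj1 (n m d1 : ℕ) :
    Disjoint (Finset.Icc 1 (n : ℤ) ×ˢ Finset.Icc 1 (m : ℤ))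
      ({((n : ℤ) + 1)} ×ˢ Finset.Icc 1 (d1 : ℤ)) := by
  rw [Finset.disjoint_left]
  rintro ⟨x, y⟩ h1 h2
  simp only [Finset.mem_product, Finset.mem_Icc, Finset.mem_singleton] at h1 h2
  omega

lemma disj2 (n m d1 d2 : ℕ) (h1 : d1 < m) :
    Disjoint ((Finset.Icc 1 (n : ℤ) ×ˢ Finset.Icc 1 (m : ℤ)) ∪
      ({((n : ℤ) + 1)} ×ˢ Finset.Icc 1 (d1 : ℤ)))
      (if d2 = 1 then ({((1 : ℤ), (m : ℤ) + 1)} : Finset (ℤ × ℤ)) else ∅) := by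
  by_cases h : d2 = 1
  · rw [if_pos h, Finset.disjoint_left]
    rintro ⟨x, y⟩ hm he
    simp only [Finset.mem_singleton, Prod.mk.injEq] at he
    simp only [Finset.mem_union, Finset.mem_product, Finset.mem_Icc,
      Finset.mem_singleton] at hm
    omega
  · rw [if_neg h]; exact Finset.disjoint_empty_right _

lemma disj3 (n m d1 d2 s : ℕ) :
    Disjoint ((Finset.Icc 1 (n : ℤ) ×ˢ Finset.Icc 1 (m : ℤ)) ∪
      ({((n : ℤ) + 1)} ×ˢ Finset.Icc 1 (d1 : ℤ)) ∪
      (if d2 = 1 then ({((1 : ℤ), (m : ℤ) + 1)} : Finset (ℤ × ℤ)) else ∅))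
      ((Finset.range s).image (fun k : ℕ => ((2 * (k : ℤ)), (-3 : ℤ)))) := by
  rw [Finset.disjoint_left]
  rintro ⟨x, y⟩ hm hs
  simp only [Finset.mem_image, Finset.mem_range, Prod.mk.injEq] at hs
  obtain ⟨k, _, _, hy⟩ := hs
  by_cases h : d2 = 1 <;>
    simp only [h, if_true, if_false, if_pos, if_neg, Finset.mem_union, Finset.mem_product,
      Finset.mem_Icc, Finset.mem_singleton, Prod.mk.injEq, Finset.notMem_empty,
      or_false] at hm <;>
  rcases hm with (h'|h') <;> omega

-- splitting a filter over the configuration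
lemma filter_card_split (n m d1 d2 s : ℕ) (h1 : d1 < m) (P : ℤ × ℤ → Prop)
    [DecidablePred P] :
    ((rectConfig n m d1 d2 s).filter P).card =
      (((Finset.Icc 1 (n : ℤ) ×ˢ Finset.Icc 1 (m : ℤ)).filter P).card +
       ((({((n : ℤ) + 1)} ×ˢ Finset.Icc 1 (d1 : ℤ))).filter P).card) +
      (((if d2 = 1 then ({((1 : ℤ), (m : ℤ) + 1)} : Finset (ℤ × ℤ)) else ∅)).filter P).card +
      (((Finset.range s).image (fun k : ℕ => ((2 * (k : ℤ)), (-3 : ℤ)))).filter P).card := by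
  unfold rectConfig
  have dC := Finset.disjoint_filter_filter (p := P) (q := P) (disj3 n m d1 d2 s)
  have dB := Finset.disjoint_filter_filter (p := P) (q := P) (disj2 n m d1 d2 h1)
  have dA := Finset.disjoint_filter_filter (p := P) (q := P) (disj1 n m d1)
  rw [Finset.filter_union, Finset.filter_union] at dC
  rw [Finset.filter_union] at dB
  rw [Finset.filter_union, Finset.filter_union, Finset.filter_union,
    Finset.card_union_of_disjoint dC, Finset.card_union_of_disjoint dB,
    Finset.card_union_of_disjoint dA]

lemma card_Icc_one (t : ℕ) : (Finset.Icc (1 : ℤ) (t : ℤ)).card = t := by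
  rw [Int.card_Icc]; omega

lemma card_Icc_two (t : ℕ) : (Finset.Icc (2 : ℤ) (t : ℤ)).card = t - 1 := by
  rw [Int.card_Icc]; omega

lemma card_rectConfig (n m d1 d2 s : ℕ) (h1 : d1 < m) (hd2 : d2 ≤ 1) :
    (rectConfig n m d1 d2 s).card = n * m + d1 + d2 + s := by
  have := filter_card_split n m d1 d2 s h1 (fun _ => True)
  simp only [Finset.filter_true] at this
  rw [this, Finset.card_product, Finset.card_product, card_Icc_one, card_Icc_one, card_Icc_one,
    Finset.card_singleton, Finset.card_image_of_injective _
      (fun k1 k2 h => by simpa using h), Finset.card_range]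
  by_cases h : d2 = 1
  · rw [if_pos h, Finset.card_singleton]; omega
  · rw [if_neg h, Finset.card_empty]; omega

lemma mem_rectConfig (n m d1 d2 s : ℕ) (x y : ℤ) :
    (x, y) ∈ rectConfig n m d1 d2 s ↔
      (1 ≤ x ∧ x ≤ n ∧ 1 ≤ y ∧ y ≤ m) ∨
      (x = n + 1 ∧ 1 ≤ y ∧ y ≤ d1) ∨
      (d2 = 1 ∧ x = 1 ∧ y = m + 1) ∨
      (∃ k < s, x = 2 * (k : ℤ) ∧ y = -3) := by
  unfold rectConfig
  constructor
  · intro hmem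
    simp only [Finset.mem_union, Finset.mem_product, Finset.mem_Icc, Finset.mem_singleton,
      Finset.mem_image, Finset.mem_range, Prod.mk.injEq] at hmem
    rcases hmem with (((⟨hx, hy⟩ | ⟨hx, hy⟩) | he) | ⟨k, hk, hx, hy⟩)
    · exact Or.inl ⟨hx.1, hx.2, hy.1, hy.2⟩
    · exact Or.inr (Or.inl ⟨hx, hy.1, hy.2⟩)
    · by_cases h : d2 = 1
      · rw [if_pos h] at he
        simp only [Finset.mem_singleton, Prod.mk.injEq] at he
        exact Or.inr (Or.inr (Or.inl ⟨h, he.1, he.2⟩))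
      · rw [if_neg h] at he; simp at he
    · exact Or.inr (Or.inr (Or.inr ⟨k, hk, hx.symm, hy.symm⟩))
  · rintro (⟨h1, h2, h3, h4⟩ | ⟨h1, h2, h3⟩ | ⟨h1, h2, h3⟩ | ⟨k, hk, hx, hy⟩)
    · apply Finset.mem_union_left; apply Finset.mem_union_left; apply Finset.mem_union_left
      simp only [Finset.mem_product, Finset.mem_Icc]; exact ⟨⟨h1, h2⟩, h3, h4⟩
    · apply Finset.mem_union_left; apply Finset.mem_union_left; apply Finset.mem_union_right
      simp only [Finset.mem_product, Finset.mem_Icc, Finset.mem_singleton]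
      exact ⟨h1, h2, h3⟩
    · apply Finset.mem_union_left; apply Finset.mem_union_right
      rw [if_pos h1]; simp [h2, h3]
    · apply Finset.mem_union_right
      simp only [Finset.mem_image, Finset.mem_range]
      exact ⟨k, hk, by rw [hx, hy]⟩

lemma H_card (n m d1 d2 s : ℕ) (h1 : d1 < m) (hn : 1 ≤ n) :
    ((rectConfig n m d1 d2 s).filter
      (fun v => ((v.1 - 1, v.2) : ℤ × ℤ) ∈ rectConfig n m d1 d2 s)).card
      = (n - 1) * m + d1 := by
  rw [filter_card_split n m d1 d2 s h1]
  have hR : ((Finset.Icc 1 (n : ℤ) ×ˢ Finset.Icc 1 (m : ℤ)).filter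
      (fun v => ((v.1 - 1, v.2) : ℤ × ℤ) ∈ rectConfig n m d1 d2 s))
      = Finset.Icc 2 (n : ℤ) ×ˢ Finset.Icc 1 (m : ℤ) := by
    ext ⟨x, y⟩
    simp only [Finset.mem_filter, Finset.mem_product, Finset.mem_Icc, mem_rectConfig]
    constructor
    · rintro ⟨h, (h' | h' | h' | ⟨k, hk, hkx, hky⟩)⟩ <;> omega
    · intro h; exact ⟨by omega, Or.inl (by omega)⟩
  have hD : (({((n : ℤ) + 1)} ×ˢ Finset.Icc 1 (d1 : ℤ)).filter
      (fun v => ((v.1 - 1, v.2) : ℤ × ℤ) ∈ rectConfig n m d1 d2 s))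
      = {((n : ℤ) + 1)} ×ˢ Finset.Icc 1 (d1 : ℤ) := by
    rw [Finset.filter_eq_self]
    rintro ⟨x, y⟩ hv
    simp only [Finset.mem_product, Finset.mem_singleton, Finset.mem_Icc] at hv
    simp only [mem_rectConfig]
    exact Or.inl (by omega)
  have hE : ((if d2 = 1 then ({((1 : ℤ), (m : ℤ) + 1)} : Finset (ℤ × ℤ)) else ∅).filter
      (fun v => ((v.1 - 1, v.2) : ℤ × ℤ) ∈ rectConfig n m d1 d2 s)) = ∅ := by
    rw [Finset.filter_eq_empty_iff]
    rintro ⟨x, y⟩ hv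
    by_cases h : d2 = 1
    · rw [if_pos h, Finset.mem_singleton] at hv
      obtain ⟨rfl, rfl⟩ := Prod.mk.injEq .. ▸ hv
      simp only [mem_rectConfig]
      rintro (h' | h' | h' | ⟨k, hk, hkx, hky⟩) <;> omega
    · rw [if_neg h] at hv; simp at hv
  have hS : (((Finset.range s).image (fun k : ℕ => ((2 * (k : ℤ)), (-3 : ℤ)))).filter
      (fun v => ((v.1 - 1, v.2) : ℤ × ℤ) ∈ rectConfig n m d1 d2 s)) = ∅ := by
    rw [Finset.filter_eq_empty_iff]
    rintro v hv
    simp only [Finset.mem_image, Finset.mem_range] at hv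
    obtain ⟨k, hk, rfl⟩ := hv
    simp only [mem_rectConfig]
    rintro (h' | h' | h' | ⟨j, hj, hjx, hjy⟩) <;> omega
  rw [hR, hD, hE, hS, Finset.card_product, Finset.card_product, card_Icc_two,
    card_Icc_one, card_Icc_one, Finset.card_singleton, Finset.card_empty]
  omega

lemma V_card (n m d1 d2 s : ℕ) (h1 : d1 < m) (hn : 1 ≤ n) (hd2 : d2 ≤ 1) :
    ((rectConfig n m d1 d2 s).filter
      (fun v => ((v.1, v.2 - 1) : ℤ × ℤ) ∈ rectConfig n m d1 d2 s)).card
      = n * (m - 1) + (d1 - 1) + d2 := by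
  rw [filter_card_split n m d1 d2 s h1]
  have hR : ((Finset.Icc 1 (n : ℤ) ×ˢ Finset.Icc 1 (m : ℤ)).filter
      (fun v => ((v.1, v.2 - 1) : ℤ × ℤ) ∈ rectConfig n m d1 d2 s))
      = Finset.Icc 1 (n : ℤ) ×ˢ Finset.Icc 2 (m : ℤ) := by
    ext ⟨x, y⟩
    simp only [Finset.mem_filter, Finset.mem_product, Finset.mem_Icc, mem_rectConfig]
    constructor
    · rintro ⟨h, (h' | h' | h' | ⟨k, hk, hkx, hky⟩)⟩ <;> omega
    · intro h; exact ⟨by omega, Or.inl (by omega)⟩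
  have hD : (({((n : ℤ) + 1)} ×ˢ Finset.Icc 1 (d1 : ℤ)).filter
      (fun v => ((v.1, v.2 - 1) : ℤ × ℤ) ∈ rectConfig n m d1 d2 s))
      = {((n : ℤ) + 1)} ×ˢ Finset.Icc 2 (d1 : ℤ) := by
    ext ⟨x, y⟩
    simp only [Finset.mem_filter, Finset.mem_product, Finset.mem_Icc,
      Finset.mem_singleton, mem_rectConfig]
    constructor
    · rintro ⟨h, (h' | h' | h' | ⟨k, hk, hkx, hky⟩)⟩ <;> omega
    · intro h; exact ⟨by omega, Or.inr (Or.inl (by omega))⟩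
  have hE : ((if d2 = 1 then ({((1 : ℤ), (m : ℤ) + 1)} : Finset (ℤ × ℤ)) else ∅).filter
      (fun v => ((v.1, v.2 - 1) : ℤ × ℤ) ∈ rectConfig n m d1 d2 s))
      = (if d2 = 1 then ({((1 : ℤ), (m : ℤ) + 1)} : Finset (ℤ × ℤ)) else ∅) := by
    rw [Finset.filter_eq_self]
    rintro ⟨x, y⟩ hv
    by_cases h : d2 = 1
    · rw [if_pos h, Finset.mem_singleton] at hv
      obtain ⟨rfl, rfl⟩ := Prod.mk.injEq .. ▸ hv
      simp only [mem_rectConfig]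
      exact Or.inl (by omega)
    · rw [if_neg h] at hv; simp at hv
  have hS : (((Finset.range s).image (fun k : ℕ => ((2 * (k : ℤ)), (-3 : ℤ)))).filter
      (fun v => ((v.1, v.2 - 1) : ℤ × ℤ) ∈ rectConfig n m d1 d2 s)) = ∅ := by
    rw [Finset.filter_eq_empty_iff]
    rintro v hv
    simp only [Finset.mem_image, Finset.mem_range] at hv
    obtain ⟨k, hk, rfl⟩ := hv
    simp only [mem_rectConfig]
    rintro (h' | h' | h' | ⟨j, hj, hjx, hjy⟩) <;> omega
  rw [hR, hD, hE, hS, Finset.card_product, Finset.card_product, card_Icc_two,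
    card_Icc_two, card_Icc_one, Finset.card_singleton, Finset.card_empty]
  by_cases h : d2 = 1
  · rw [if_pos h, Finset.card_singleton]; omega
  · rw [if_neg h, Finset.card_empty]; omega

lemma filter_nbrs_card (p : ℤ × ℤ → Prop) [DecidablePred p] (v : ℤ × ℤ) :
    ((nbrs v).filter p).card =
      ((if p (v.1 + 1, v.2) then 1 else 0) + (if p (v.1 - 1, v.2) then 1 else 0)) +
      ((if p (v.1, v.2 + 1) then 1 else 0) + (if p (v.1, v.2 - 1) then 1 else 0)) := by
  rw [Finset.card_filter]
  show ∑ a ∈ insert (v.1+1, v.2) (insert (v.1-1, v.2) (insert (v.1, v.2+1) {(v.1, v.2-1)})), _ = _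
  rw [Finset.sum_insert (by simp [Prod.ext_iff] <;> omega),
      Finset.sum_insert (by simp [Prod.ext_iff] <;> omega),
      Finset.sum_insert (by simp [Prod.ext_iff] <;> omega),
      Finset.sum_singleton]
  ring

lemma shiftH_card (A : Finset (ℤ × ℤ)) :
    (A.filter (fun v => ((v.1 + 1, v.2) : ℤ × ℤ) ∈ A)).card
      = (A.filter (fun v => ((v.1 - 1, v.2) : ℤ × ℤ) ∈ A)).card := by
  apply Finset.card_bij (fun v _ => ((v.1 + 1, v.2) : ℤ × ℤ))
  · intro a ha; simp only [mem_filter] at ha ⊢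
    refine ⟨ha.2, ?_⟩; simpa using ha.1
  · intro a _ b _ h; simp [Prod.ext_iff] at h; exact Prod.ext h.1 h.2
  · intro b hb; simp only [mem_filter] at hb
    exact ⟨(b.1 - 1, b.2), by simp [mem_filter, hb.1, hb.2], by simp⟩

lemma shiftV_card (A : Finset (ℤ × ℤ)) :
    (A.filter (fun v => ((v.1, v.2 + 1) : ℤ × ℤ) ∈ A)).card
      = (A.filter (fun v => ((v.1, v.2 - 1) : ℤ × ℤ) ∈ A)).card := by
  apply Finset.card_bij (fun v _ => ((v.1, v.2 + 1) : ℤ × ℤ))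
  · intro a ha; simp only [mem_filter] at ha ⊢
    refine ⟨ha.2, ?_⟩; simpa using ha.1
  · intro a _ b _ h; simp [Prod.ext_iff] at h; exact Prod.ext h.1 h.2
  · intro b hb; simp only [mem_filter] at hb
    exact ⟨(b.1, b.2 - 1), by simp [mem_filter, hb.1, hb.2], by simp⟩

lemma T2_formula (A : Finset (ℤ × ℤ)) :
    T2 A + 2 * ((A.filter (fun v => ((v.1 - 1, v.2) : ℤ × ℤ) ∈ A)).card
      + (A.filter (fun v => ((v.1, v.2 - 1) : ℤ × ℤ) ∈ A)).card) = 4 * A.card := by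
  have hnb : ∀ v : ℤ × ℤ, (nbrs v).card = 4 := by
    intro v
    simp only [nbrs]
    rw [Finset.card_insert_of_notMem (by simp [Prod.ext_iff] <;> omega),
        Finset.card_insert_of_notMem (by simp [Prod.ext_iff] <;> omega),
        Finset.card_insert_of_notMem (by simp [Prod.ext_iff] <;> omega),
        Finset.card_singleton]
  have key : ∀ v ∈ A, ((nbrs v).filter (fun w => w ∉ A)).card
      + ((nbrs v).filter (fun w => w ∈ A)).card = 4 := by
    intro v _
    rw [add_comm, Finset.card_filter_add_card_filter_not, hnb]
  have h1 : T2 A + ∑ v ∈ A, ((nbrs v).filter (fun w => w ∈ A)).card = 4 * A.card := by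
    rw [T2, ← Finset.sum_add_distrib, Finset.sum_congr rfl key]
    simp [mul_comm]
  have h2 : ∑ v ∈ A, ((nbrs v).filter (fun w => w ∈ A)).card
      = 2 * ((A.filter (fun v => ((v.1 - 1, v.2) : ℤ × ℤ) ∈ A)).card
      + (A.filter (fun v => ((v.1, v.2 - 1) : ℤ × ℤ) ∈ A)).card) := by
    have := fun v => filter_nbrs_card (fun w => w ∈ A) v
    rw [Finset.sum_congr rfl (fun v _ => this v)]
    rw [Finset.sum_add_distrib, Finset.sum_add_distrib, Finset.sum_add_distrib]
    rw [← Finset.card_filter, ← Finset.card_filter, ← Finset.card_filter, ← Finset.card_filter]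
    rw [shiftH_card, shiftV_card]
    ring
  omega


/-- Sufficient statistics of a rectangular configuration `(n, m, d₁, d₂, s)`:
`T₁ = n·m + d₁ + d₂ + s` and `T₂ = 2(n + m + δ_{d₁} + d₂ + 2s)`, where
`δ_{d₁} = 0` if `d₁ = 0` and `δ_{d₁} = 1` otherwise. -/
theorem rectConfig_suff_stats (n m d1 d2 s : ℕ)
    (h2 : d2 ≤ d1) (h1 : d1 < m) (hmn : m ≤ n) (hd2 : d2 ≤ 1) :
    (rectConfig n m d1 d2 s).card = n * m + d1 + d2 + s ∧
    T2 (rectConfig n m d1 d2 s) =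
      2 * (n + m + (if d1 = 0 then 0 else 1) + d2 + 2 * s) := by
  refine ⟨card_rectConfig n m d1 d2 s h1 hd2, ?_⟩
  have hn : 1 ≤ n := by omega
  have hf := T2_formula (rectConfig n m d1 d2 s)
  rw [H_card n m d1 d2 s h1 hn, V_card n m d1 d2 s h1 hn hd2,
      card_rectConfig n m d1 d2 s h1 hd2] at hf
  obtain ⟨n', rfl⟩ : ∃ n', n = n' + 1 := ⟨n - 1, by omega⟩
  obtain ⟨m', rfl⟩ : ∃ m', m = m' + 1 := ⟨m - 1, by omega⟩
  have e1 : (n' + 1) * (m' + 1) = n' * m' + n' + m' + 1 := by ring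
  have e2 : (n' + 1 - 1) * (m' + 1) = n' * m' + n' := by simp [Nat.add_sub_cancel]; ring
  have e3 : (n' + 1) * (m' + 1 - 1) = n' * m' + m' := by simp [Nat.add_sub_cancel]; ring
  rw [e2, e3, e1] at hf
  by_cases hd1 : d1 = 0
  · rw [if_pos hd1]
    generalize n' * m' = t at hf
    omega
  · rw [if_neg hd1]
    generalize n' * m' = t at hf
    omega
end

section
/- Let y be a configuration of the 2-dimensional Ising model with T_1(y) = a ones whose induced subgraph has no singleton components removed, i.e. suppose y decomposes into s singletons and a remainder c with T_1(c) = a − s. Then T_2(y) = T_2(c) + 4s, and T_2(c) ≥ 4(a−s) − 2⌊2(a−s) − 2√(a−s)⌋. -/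
open Finset

lemma mem_nbrs {v w : ℤ × ℤ} : w ∈ nbrs v ↔
    (w = (v.1+1, v.2) ∨ w = (v.1-1, v.2) ∨ w = (v.1, v.2+1) ∨ w = (v.1, v.2-1)) := by
  simp [nbrs]

lemma nbrs_symm {v w : ℤ × ℤ} (h : w ∈ nbrs v) : v ∈ nbrs w := by
  rw [mem_nbrs] at h ⊢
  rcases h with h|h|h|h <;> subst h <;> simp [Prod.ext_iff]

lemma card_nbrs (v : ℤ × ℤ) : (nbrs v).card = 4 := by
  rw [nbrs]
  rw [card_insert_of_notMem, card_insert_of_notMem, card_insert_of_notMem,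
    card_singleton] <;> simp [Prod.ext_iff] <;> omega

lemma part1 (A C D : Finset (ℤ × ℤ)) (hU : A = C ∪ D) (hdisj : Disjoint C D)
    (hsing : ∀ d ∈ D, ∀ w ∈ nbrs d, w ∉ A) :
    T2 A = T2 C + 4 * D.card := by
  subst hU
  have hCA : C ⊆ C ∪ D := subset_union_left
  have key : ∀ v ∈ C, ((nbrs v).filter (fun w => w ∉ C ∪ D)).card
      = ((nbrs v).filter (fun w => w ∉ C)).card := by
    intro v hv
    congr 1
    apply filter_congr
    intro w hw
    constructor
    · intro h hC; exact h (hCA hC)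
    · intro h hA
      rcases mem_union.1 hA with hC | hD
      · exact h hC
      · exact hsing w hD v (nbrs_symm hw) (hCA hv)
  have hDA : ∀ d ∈ D, ((nbrs d).filter (fun w => w ∉ C ∪ D)).card = 4 := by
    intro d hd
    rw [filter_true_of_mem (fun w hw => hsing d hd w hw), card_nbrs]
  rw [T2, sum_union hdisj, sum_congr rfl key, sum_congr rfl hDA,
    sum_const, smul_eq_mul, Nat.mul_comm, T2]

def vnb (v : ℤ × ℤ) : Finset (ℤ × ℤ) := {(v.1, v.2 + 1), (v.1, v.2 - 1)}
def hnb (v : ℤ × ℤ) : Finset (ℤ × ℤ) := {(v.1 + 1, v.2), (v.1 - 1, v.2)}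

lemma nbrs_split (v : ℤ × ℤ) (C : Finset (ℤ × ℤ)) :
    ((nbrs v).filter (fun w => w ∉ C)).card
      = ((hnb v).filter (fun w => w ∉ C)).card + ((vnb v).filter (fun w => w ∉ C)).card := by
  have h1 : nbrs v = hnb v ∪ vnb v := by
    ext w; simp [nbrs, hnb, vnb]; tauto
  have h2 : Disjoint (hnb v) (vnb v) := by
    simp [disjoint_left, hnb, vnb, Prod.ext_iff]
    omega
  rw [h1, filter_union, card_union_of_disjoint (disjoint_filter_filter h2)]

lemma T2_split (C : Finset (ℤ × ℤ)) :
    T2 C = (∑ v ∈ C, ((hnb v).filter (fun w => w ∉ C)).card)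
         + (∑ v ∈ C, ((vnb v).filter (fun w => w ∉ C)).card) := by
  rw [T2, ← sum_add_distrib]
  exact sum_congr rfl fun v _ => nbrs_split v C

lemma col_bound (C : Finset (ℤ × ℤ)) :
    2 * (C.image Prod.fst).card ≤ ∑ v ∈ C, ((vnb v).filter (fun w => w ∉ C)).card := by
  classical
  rw [← card_sigma]
  set col : ℤ → Finset ℤ := fun x => (C.filter (fun v => v.1 = x)).image Prod.snd with hcol
  set M : ℤ → ℤ := fun x => WithBot.unbotD 0 ((col x).max) with hM
  set m : ℤ → ℤ := fun x => WithTop.untopD 0 ((col x).min) with hm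
  set f : ℤ × Bool → (Σ _ : ℤ × ℤ, ℤ × ℤ) := fun p =>
    if p.2 then ⟨(p.1, M p.1), (p.1, M p.1 + 1)⟩
    else ⟨(p.1, m p.1), (p.1, m p.1 - 1)⟩ with hfdef
  have hne : ∀ x ∈ C.image Prod.fst, (col x).Nonempty := by
    intro x hx
    rcases mem_image.1 hx with ⟨v, hv, rfl⟩
    exact ⟨v.2, mem_image.2 ⟨v, mem_filter.2 ⟨hv, rfl⟩, rfl⟩⟩
  have hmemC : ∀ x, ∀ y ∈ col x, (x, y) ∈ C := by
    intro x y hy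
    rcases mem_image.1 hy with ⟨v, hv, rfl⟩
    rcases mem_filter.1 hv with ⟨hvC, hv1⟩
    rw [← hv1]
    rwa [show (v.1, v.2) = v from Prod.ext rfl rfl]
  have hMfacts : ∀ x ∈ C.image Prod.fst, M x ∈ col x ∧ ∀ y ∈ col x, y ≤ M x := by
    intro x hx
    obtain ⟨b, hb⟩ := Finset.max_of_nonempty (hne x hx)
    have hMb : M x = b := by rw [hM]; simp only [hb]; rfl
    refine ⟨hMb ▸ Finset.mem_of_max hb, fun y hy => ?_⟩
    have := Finset.le_max hy
    rw [hb, hMb] at *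
    exact_mod_cast this
  have hmfacts : ∀ x ∈ C.image Prod.fst, m x ∈ col x ∧ ∀ y ∈ col x, m x ≤ y := by
    intro x hx
    obtain ⟨b, hb⟩ := Finset.min_of_nonempty (hne x hx)
    have hmb : m x = b := by rw [hm]; simp only [hb]; rfl
    refine ⟨hmb ▸ Finset.mem_of_min hb, fun y hy => ?_⟩
    have := Finset.min_le hy
    rw [hb, hmb] at *
    exact_mod_cast this
  have hmain : ((C.image Prod.fst) ×ˢ (univ : Finset Bool)).card ≤
      (C.sigma fun v => (vnb v).filter (fun w => w ∉ C)).card := by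
    apply card_le_card_of_injOn f
    · rintro ⟨x, b⟩ hp
      rcases mem_product.1 hp with ⟨hx, -⟩
      obtain ⟨hMmem, hMub⟩ := hMfacts x hx
      obtain ⟨hmmem, hmlb⟩ := hmfacts x hx
      have hmaxC : (x, M x) ∈ C := hmemC x _ hMmem
      have hminC : (x, m x) ∈ C := hmemC x _ hmmem
      have hmaxN : (x, M x + 1) ∉ C := by
        intro hc
        have : M x + 1 ∈ col x := mem_image.2 ⟨_, mem_filter.2 ⟨hc, rfl⟩, rfl⟩
        have := hMub _ this
        omega
      have hminN : (x, m x - 1) ∉ C := by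
        intro hc
        have : m x - 1 ∈ col x := mem_image.2 ⟨_, mem_filter.2 ⟨hc, rfl⟩, rfl⟩
        have := hmlb _ this
        omega
      cases b
      · simp only [hfdef, if_neg Bool.false_ne_true]
        exact mem_sigma.2 ⟨hminC, mem_filter.2 ⟨by simp [vnb], hminN⟩⟩
      · simp only [hfdef, if_pos rfl]
        exact mem_sigma.2 ⟨hmaxC, mem_filter.2 ⟨by simp [vnb], hmaxN⟩⟩
    · rintro ⟨x, b⟩ hp ⟨x', b'⟩ hp' heq
      cases b <;> cases b' <;>
        simp only [hfdef, if_pos rfl, if_neg Bool.false_ne_true, Sigma.mk.inj_iff,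
          heq_eq_eq, Prod.mk.injEq] at heq
      · exact Prod.ext heq.1.1 rfl
      · obtain ⟨⟨rfl, h1⟩, -, h2⟩ := heq
        omega
      · obtain ⟨⟨rfl, h1⟩, -, h2⟩ := heq
        omega
      · exact Prod.ext heq.1.1 rfl
  calc 2 * (C.image Prod.fst).card
      = ((C.image Prod.fst) ×ˢ (univ : Finset Bool)).card := by
        rw [card_product]; simp [Nat.mul_comm]
    _ ≤ _ := hmain

lemma row_bound (C : Finset (ℤ × ℤ)) :
    2 * (C.image Prod.snd).card ≤ ∑ v ∈ C, ((hnb v).filter (fun w => w ∉ C)).card := by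
  classical
  have hswap : Function.Injective (Prod.swap : ℤ × ℤ → ℤ × ℤ) := Prod.swap_injective
  have h := col_bound (C.image Prod.swap)
  rw [image_image] at h
  have h1 : (Prod.fst ∘ Prod.swap : ℤ × ℤ → ℤ) = Prod.snd := rfl
  rw [h1] at h
  rw [sum_image (fun a _ b _ hab => hswap hab)] at h
  refine le_trans h (le_of_eq (sum_congr rfl fun v hv => ?_))
  have h2 : vnb v.swap = (hnb v).image Prod.swap := by
    ext w; simp [vnb, hnb, Prod.ext_iff]
  rw [h2, filter_image, card_image_of_injective _ hswap]
  congr 1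
  apply filter_congr
  intro w hw
  constructor
  · intro hn hc
    exact hn (mem_image.2 ⟨w, hc, rfl⟩)
  · intro hn hc
    rcases mem_image.1 hc with ⟨u, hu, huw⟩
    exact hn (by rwa [← hswap huw])

lemma arith (w h n : ℕ) (hn : n ≤ w * h) :
    (2 * (w + h) : ℤ) ≥ 4 * (n : ℤ) - 2 * ⌊2 * (n : ℝ) - 2 * Real.sqrt n⌋ := by
  have hfloor : ⌊2 * (n : ℝ) - 2 * Real.sqrt n⌋ = 2 * (n : ℤ) + ⌊-(2 * Real.sqrt n)⌋ := by
    rw [show 2 * (n : ℝ) - 2 * Real.sqrt n = ((2 * (n : ℤ) : ℤ) : ℝ) + (-(2 * Real.sqrt n)) by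
      push_cast; ring, Int.floor_intCast_add]
  rw [hfloor, Int.floor_neg]
  have hceil : ⌈2 * Real.sqrt n⌉ ≤ ((w : ℤ) + h) := by
    rw [Int.ceil_le]
    have h1 : Real.sqrt n ≤ Real.sqrt ((w : ℝ) * h) := by
      apply Real.sqrt_le_sqrt
      exact_mod_cast hn
    have h2 : Real.sqrt ((w : ℝ) * h) = Real.sqrt w * Real.sqrt h := by
      rw [Real.sqrt_mul (by positivity)]
    have h3 : 2 * (Real.sqrt w * Real.sqrt h) ≤ (w : ℝ) + h := by
      nlinarith [sq_nonneg (Real.sqrt w - Real.sqrt h), Real.sq_sqrt (show (0:ℝ) ≤ w by positivity),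
        Real.sq_sqrt (show (0:ℝ) ≤ h by positivity)]
    push_cast
    nlinarith [h1, h2, h3]
  omega

/-- If a configuration `A` with `a` ones decomposes into `s` singletons `D`
(cells with no neighbor in `A`) and a remainder `C`, then `T₂(A) = T₂(C) + 4s`
and, by the Harary–Harborth bound,
`T₂(C) ≥ 4(a−s) − 2⌊2(a−s) − 2√(a−s)⌋`. -/
theorem T2_decomposition_and_lower_bound (a s : ℕ) (A C D : Finset (ℤ × ℤ))
    (hU : A = C ∪ D) (hdisj : Disjoint C D)
    (hsing : ∀ d ∈ D, ∀ w ∈ nbrs d, w ∉ A)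
    (hD : D.card = s) (hA : A.card = a) :
    T2 A = T2 C + 4 * s ∧
    (T2 C : ℤ) ≥ 4 * ((a : ℤ) - (s : ℤ)) -
      2 * ⌊2 * ((a : ℝ) - (s : ℝ)) - 2 * Real.sqrt ((a : ℝ) - (s : ℝ))⌋ := by
  have hcard : a = C.card + s := by
    subst hA hD hU
    rw [card_union_of_disjoint hdisj]
  refine ⟨by rw [part1 A C D hU hdisj hsing, hD], ?_⟩
  set n := C.card with hn
  have haZ : (a : ℤ) - (s : ℤ) = (n : ℤ) := by
    have : (a : ℤ) = (n : ℤ) + (s : ℤ) := by exact_mod_cast hcard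
    omega
  have haR : (a : ℝ) - (s : ℝ) = (n : ℝ) := by
    have : (a : ℝ) = (n : ℝ) + (s : ℝ) := by exact_mod_cast hcard
    linarith
  rw [haZ, haR]
  have hXY : n ≤ (C.image Prod.fst).card * (C.image Prod.snd).card := by
    calc n = C.card := rfl
      _ ≤ ((C.image Prod.fst) ×ˢ (C.image Prod.snd)).card := by
          apply card_le_card
          intro v hv
          exact mem_product.2 ⟨mem_image_of_mem _ hv, mem_image_of_mem _ hv⟩
      _ = _ := card_product _ _
  have hT2 : 2 * ((C.image Prod.fst).card + (C.image Prod.snd).card) ≤ T2 C := by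
    rw [T2_split]
    have h1 := col_bound C
    have h2 := row_bound C
    omega
  have harith := arith (C.image Prod.fst).card (C.image Prod.snd).card n hXY
  have hcast : ((2 * ((C.image Prod.fst).card + (C.image Prod.snd).card) : ℕ) : ℤ)
      ≤ (T2 C : ℤ) := by exact_mod_cast hT2
  push_cast at hcast harith ⊢
  linarith
end
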